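/- Let T_y be the translation operator on L²(𝕋). For every δ ∈ ℝ and every v ∈ L²(𝕋), the operator S v = (3/16) T_{2δ} v + (3/8) v + (3/4) T_{-2δ} v − (3/8) T_{-4δ} v + (1/16) T_{-6δ} v satisfies ‖v‖² − ‖S v‖² = (3/256)·‖v − 2 T_{2δ} v + 2 T_{6δ} v − T_{8δ} v‖² ≥ 0; in particular ‖S v‖_{L²} ≤ ‖v‖_{L²}. -/

import Mathlib

open MeasureTheory

/-- Translation operator on functions on the circle 𝕋 = ℝ/ℤ. -/
noncomputable def Tr (y : ℝ) (v : AddCircle (1:ℝ) → ℝ) : AddCircle (1:ℝ) → ℝ :=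
  fun x => v (x - (y : AddCircle (1:ℝ)))

open scoped ENNReal

lemma stmt6_mul_int {f g : AddCircle (1:ℝ) → ℝ} (hf : MemLp f 2) (hg : MemLp g 2) :
    Integrable (fun x => f x * g x) := by
  have h := (hg.smul hf (r := 1)).integrable le_rfl
  simpa [smul_eq_mul, Pi.mul_def] using h

lemma stmt6_tr_mem {v : AddCircle (1:ℝ) → ℝ} (hv : MemLp v 2) (a : ℝ) : MemLp (Tr a v) 2 :=
  hv.comp_measurePreserving (measurePreserving_sub_right volume _)

noncomputable def stmt6_cI (v : AddCircle (1:ℝ) → ℝ) (a : ℝ) : ℝ :=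
  ∫ x : AddCircle (1:ℝ), v x * v (x - (a : AddCircle (1:ℝ)))

lemma stmt6_prod_int (v : AddCircle (1:ℝ) → ℝ) (a b : ℝ) :
    ∫ x : AddCircle (1:ℝ), Tr a v x * Tr b v x = stmt6_cI v (b - a) := by
  have h := integral_sub_right_eq_self (μ := (volume : Measure (AddCircle (1:ℝ))))
    (fun x : AddCircle (1:ℝ) => v x * v (x - ((b - a : ℝ) : AddCircle (1:ℝ)))) (a : AddCircle (1:ℝ))
  rw [stmt6_cI, ← h]
  congr 1; funext x
  rw [Tr, Tr]
  congr 2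
  simp only [QuotientAddGroup.mk_sub, QuotientAddGroup.mk_neg, QuotientAddGroup.mk_add]
  abel

lemma stmt6_cI_neg (v : AddCircle (1:ℝ) → ℝ) (a : ℝ) : stmt6_cI v (-a) = stmt6_cI v a := by
  have h := integral_sub_right_eq_self (μ := (volume : Measure (AddCircle (1:ℝ))))
    (fun x : AddCircle (1:ℝ) => v x * v (x - ((-a : ℝ) : AddCircle (1:ℝ)))) ((a : ℝ) : AddCircle (1:ℝ))
  rw [stmt6_cI, ← h, stmt6_cI]
  congr 1; funext x
  simp only [QuotientAddGroup.mk_sub, QuotientAddGroup.mk_neg, QuotientAddGroup.mk_add]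
  rw [mul_comm]
  congr 2 <;> abel

lemma stmt6_Tr_zero (v : AddCircle (1:ℝ) → ℝ) : Tr 0 v = v := by
  funext x
  rw [Tr, show ((0:ℝ) : AddCircle (1:ℝ)) = 0 from rfl, sub_zero]

lemma stmt6_integral_sq_sum (v : AddCircle (1:ℝ) → ℝ) (hv : MemLp v 2) (n : ℕ)
    (c a : Fin n → ℝ) :
    ∫ x : AddCircle (1:ℝ), (∑ i, c i * Tr (a i) v x) ^ 2
      = ∑ i, ∑ j, c i * c j * stmt6_cI v (a j - a i) := by
  have hint : ∀ i j : Fin n,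
      Integrable (fun x : AddCircle (1:ℝ) => (c i * Tr (a i) v x) * (c j * Tr (a j) v x)) := by
    intro i j
    have h := ((stmt6_mul_int (stmt6_tr_mem hv (a i)) (stmt6_tr_mem hv (a j)))).const_mul
      (c i * c j)
    exact h.congr (Filter.Eventually.of_forall fun x => by ring)
  calc ∫ x : AddCircle (1:ℝ), (∑ i, c i * Tr (a i) v x) ^ 2
      = ∫ x : AddCircle (1:ℝ), ∑ i, ∑ j, (c i * Tr (a i) v x) * (c j * Tr (a j) v x) := by
        congr 1; funext x; rw [sq, Finset.sum_mul_sum]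
    _ = ∑ i, ∑ j, ∫ x : AddCircle (1:ℝ), (c i * Tr (a i) v x) * (c j * Tr (a j) v x) := by
        rw [integral_finset_sum _ (fun i _ => integrable_finset_sum _ (fun j _ => hint i j))]
        exact Finset.sum_congr rfl fun i _ => integral_finset_sum _ (fun j _ => hint i j)
    _ = ∑ i, ∑ j, c i * c j * stmt6_cI v (a j - a i) := by
        refine Finset.sum_congr rfl fun i _ => Finset.sum_congr rfl fun j _ => ?_
        rw [show (fun x : AddCircle (1:ℝ) => (c i * Tr (a i) v x) * (c j * Tr (a j) v x))
            = fun x => (c i * c j) * (Tr (a i) v x * Tr (a j) v x) from funext fun x => by ring,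
          MeasureTheory.integral_const_mul, stmt6_prod_int]

theorem stmt6 (δ : ℝ) (v : AddCircle (1:ℝ) → ℝ) (hv : MemLp v 2) :
    ((∫ x : AddCircle (1:ℝ), (v x) ^ 2) -
        ∫ x : AddCircle (1:ℝ),
          ((3/16) * Tr (2*δ) v x + (3/8) * v x + (3/4) * Tr (-(2*δ)) v x -
            (3/8) * Tr (-(4*δ)) v x + (1/16) * Tr (-(6*δ)) v x) ^ 2) =
      (3/256) * ∫ x : AddCircle (1:ℝ),
          (v x - 2 * Tr (2*δ) v x + 2 * Tr (6*δ) v x - Tr (8*δ) v x) ^ 2 ∧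
    Real.sqrt (∫ x : AddCircle (1:ℝ),
        ((3/16) * Tr (2*δ) v x + (3/8) * v x + (3/4) * Tr (-(2*δ)) v x -
          (3/8) * Tr (-(4*δ)) v x + (1/16) * Tr (-(6*δ)) v x) ^ 2) ≤
      Real.sqrt (∫ x : AddCircle (1:ℝ), (v x) ^ 2) := by
  have hneg : ∀ k : ℝ, stmt6_cI v (-(δ * k)) = stmt6_cI v (δ * k) := fun k => stmt6_cI_neg v (δ * k)
  have h0 : (∫ x : AddCircle (1:ℝ), (v x) ^ 2) = stmt6_cI v 0 := by
    rw [stmt6_cI]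
    congr 1; funext x
    rw [show ((0:ℝ) : AddCircle (1:ℝ)) = 0 from rfl, sub_zero, sq]
  have hS : ∫ x : AddCircle (1:ℝ),
      ((3/16) * Tr (2*δ) v x + (3/8) * v x + (3/4) * Tr (-(2*δ)) v x -
        (3/8) * Tr (-(4*δ)) v x + (1/16) * Tr (-(6*δ)) v x) ^ 2
      = ∑ i : Fin 5, ∑ j : Fin 5,
          (![3/16, 3/8, 3/4, -(3/8), 1/16] : Fin 5 → ℝ) i *
          (![3/16, 3/8, 3/4, -(3/8), 1/16] : Fin 5 → ℝ) j *
          stmt6_cI v ((![2*δ, 0, -(2*δ), -(4*δ), -(6*δ)] : Fin 5 → ℝ) j -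
                (![2*δ, 0, -(2*δ), -(4*δ), -(6*δ)] : Fin 5 → ℝ) i) := by
    rw [← stmt6_integral_sq_sum v hv 5 _ _]
    congr 1; funext x
    simp [Fin.sum_univ_five, stmt6_Tr_zero]
    ring
  have hW : ∫ x : AddCircle (1:ℝ),
      (v x - 2 * Tr (2*δ) v x + 2 * Tr (6*δ) v x - Tr (8*δ) v x) ^ 2
      = ∑ i : Fin 4, ∑ j : Fin 4,
          (![1, -2, 2, -1] : Fin 4 → ℝ) i * (![1, -2, 2, -1] : Fin 4 → ℝ) j *
          stmt6_cI v ((![0, 2*δ, 6*δ, 8*δ] : Fin 4 → ℝ) j -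
                (![0, 2*δ, 6*δ, 8*δ] : Fin 4 → ℝ) i) := by
    rw [← stmt6_integral_sq_sum v hv 4 _ _]
    congr 1; funext x
    simp [Fin.sum_univ_four, stmt6_Tr_zero]
    ring
  simp only [Fin.sum_univ_five, Fin.sum_univ_four, Matrix.cons_val_zero, Matrix.cons_val_one,
    Matrix.head_cons, Matrix.cons_val_two, Matrix.tail_cons, Matrix.cons_val_three,
    Matrix.cons_val_four, Matrix.head_fin_const] at hS hW
  ring_nf at hS hW
  simp only [hneg] at hS hW
  have key : ((∫ x : AddCircle (1:ℝ), (v x) ^ 2) -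
        ∫ x : AddCircle (1:ℝ),
          ((3/16) * Tr (2*δ) v x + (3/8) * v x + (3/4) * Tr (-(2*δ)) v x -
            (3/8) * Tr (-(4*δ)) v x + (1/16) * Tr (-(6*δ)) v x) ^ 2) =
      (3/256) * ∫ x : AddCircle (1:ℝ),
          (v x - 2 * Tr (2*δ) v x + 2 * Tr (6*δ) v x - Tr (8*δ) v x) ^ 2 := by
    rw [h0]
    ring_nf
    rw [hS, hW]
    ring
  refine ⟨key, Real.sqrt_le_sqrt ?_⟩
  have hWnn : (0:ℝ) ≤ ∫ x : AddCircle (1:ℝ),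
      (v x - 2 * Tr (2*δ) v x + 2 * Tr (6*δ) v x - Tr (8*δ) v x) ^ 2 :=
    integral_nonneg fun x => sq_nonneg _
  linarith [key, hWnn]
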